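/- arXiv:2503.21007 — 2 statements merged into one kernel-verified Lean document; each statement's English description precedes it below -/
import Mathlib

section
/- Fix w with 0 ≤ w ≤ k, suppose each φ_l is differentiable, and regard Φ_w as a function of the single weight matrix V_j (all other weights and σ_a held fixed). If 0 ≤ j ≤ w, then the Fréchet derivative of this map at V_j applied to a direction H ∈ ℝ^{L_j × L_{j+1}} equals ( ∏^{↶}_{l=j+1,…,w} V_lᵀ φ'_l(Φ_{l-1}) ) · ( Hᵀ φ_j ), where φ_0 := σ_a, φ_j := φ_j(Φ_{j-1}) for j ≥ 1, φ'_l is the Jacobian of φ_l, and the arrow denotes the right-to-left ordered product V_wᵀ φ'_w(Φ_{w-1}) ⋯ V_{j+1}ᵀ φ'_{j+1}(Φ_j) (the identity when j = w). If j > w, then Φ_w does not depend on V_j and this derivative is the zero map. -/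
open scoped Matrix Matrix.Norms.L2Operator

/-! Changing `V_j` leaves `Φ_0, …, Φ_{j-1}` untouched, so `Φ_j = V_jᵀ φ_j` is linear in `V_j`
with derivative `H ↦ Hᵀ φ_j`. Each further layer `Φ_l = V_lᵀ φ_l(Φ_{l-1})` composes this with
`V_lᵀ φ'_l(Φ_{l-1})` by the chain rule, which builds up the ordered product. -/

/-- The linear map `x ↦ Aᵀ x` on Euclidean spaces, i.e. the action of the (transposed)
weight matrix `A` as in `Φⱼ = Vⱼᵀ φⱼ(Φⱼ₋₁)`. Its operator norm equals the spectral norm of `A`. -/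
noncomputable def matCLM {a b : ℕ} (A : Matrix (Fin a) (Fin b) ℝ) :
    EuclideanSpace ℝ (Fin a) →L[ℝ] EuclideanSpace ℝ (Fin b) :=
  LinearMap.toContinuousLinearMap (Matrix.toEuclideanLin Aᵀ)

/-- The layer outputs of a fully-connected feedforward DNN:
`Φ₀ = V₀ᵀ σₐ` and `Φⱼ = Vⱼᵀ φⱼ(Φⱼ₋₁)`. -/
noncomputable def dnnPhi (L : ℕ → ℕ)
    (V : (j : ℕ) → Matrix (Fin (L j)) (Fin (L (j+1))) ℝ)
    (σa : EuclideanSpace ℝ (Fin (L 0)))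
    (φ : (j : ℕ) → EuclideanSpace ℝ (Fin (L j)) → EuclideanSpace ℝ (Fin (L j))) :
    (j : ℕ) → EuclideanSpace ℝ (Fin (L (j+1)))
  | 0 => matCLM (V 0) σa
  | (j+1) => matCLM (V (j+1)) (φ (j+1) (dnnPhi L V σa φ j))

/-- `phiVec j` is the shorthand `φⱼ`: `φ₀ = σₐ` and `φⱼ = φⱼ(Φⱼ₋₁)` for `j ≥ 1`. -/
noncomputable def phiVec (L : ℕ → ℕ)
    (V : (j : ℕ) → Matrix (Fin (L j)) (Fin (L (j+1))) ℝ)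
    (σa : EuclideanSpace ℝ (Fin (L 0)))
    (φ : (j : ℕ) → EuclideanSpace ℝ (Fin (L j)) → EuclideanSpace ℝ (Fin (L j))) :
    (j : ℕ) → EuclideanSpace ℝ (Fin (L j))
  | 0 => σa
  | (j+1) => φ (j+1) (dnnPhi L V σa φ j)

/-- The right-to-left ordered product `∏↶_{l=j+1}^{w} Vₗᵀ φ'ₗ(Φₗ₋₁)`, as a continuous linear
map `ℝ^{L_{j+1}} → ℝ^{L_{w+1}}`; it is the identity when `w = j` (and junk for `w < j`). -/
noncomputable def ordProd (L : ℕ → ℕ)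
    (V : (j : ℕ) → Matrix (Fin (L j)) (Fin (L (j+1))) ℝ)
    (σa : EuclideanSpace ℝ (Fin (L 0)))
    (φ : (j : ℕ) → EuclideanSpace ℝ (Fin (L j)) → EuclideanSpace ℝ (Fin (L j)))
    (j : ℕ) :
    (w : ℕ) → (EuclideanSpace ℝ (Fin (L (j+1))) →L[ℝ] EuclideanSpace ℝ (Fin (L (w+1))))
  | 0 => if h : j = 0 then by subst h; exact ContinuousLinearMap.id ℝ _ else 0
  | (w+1) =>
      if h : j = w + 1 then by subst h; exact ContinuousLinearMap.id ℝ _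
      else ((matCLM (V (w+1))).comp
              (fderiv ℝ (φ (w+1)) (dnnPhi L V σa φ w))).comp (ordProd L V σa φ j w)

noncomputable def matCLMApply {a b : ℕ} (v : EuclideanSpace ℝ (Fin a)) :
    Matrix (Fin a) (Fin b) ℝ →L[ℝ] EuclideanSpace ℝ (Fin b) :=
  LinearMap.toContinuousLinearMap
    { toFun := fun X => matCLM X v
      map_add' := fun X Y => by simp [matCLM, Matrix.transpose_add]
      map_smul' := fun c X => by simp [matCLM, Matrix.transpose_smul] }

section

variable (L : ℕ → ℕ) (V : (j : ℕ) → Matrix (Fin (L j)) (Fin (L (j+1))) ℝ)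
  (σa : EuclideanSpace ℝ (Fin (L 0)))
  (φ : (j : ℕ) → EuclideanSpace ℝ (Fin (L j)) → EuclideanSpace ℝ (Fin (L j)))

lemma ordProd_self (j : ℕ) : ordProd L V σa φ j j = ContinuousLinearMap.id ℝ _ := by
  cases j <;> simp [ordProd]

lemma ordProd_succ_of_ne {j w : ℕ} (h : j ≠ w + 1) :
    ordProd L V σa φ j (w + 1) =
      ((matCLM (V (w+1))).comp (fderiv ℝ (φ (w+1)) (dnnPhi L V σa φ w))).comp
        (ordProd L V σa φ j w) := by
  rw [ordProd, dif_neg h]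

variable {j : ℕ} (X : Matrix (Fin (L j)) (Fin (L (j+1))) ℝ)

lemma dnnPhi_update_of_lt {w : ℕ} (h : w < j) :
    dnnPhi L (Function.update V j X) σa φ w = dnnPhi L V σa φ w := by
  induction w with
  | zero => simp [dnnPhi, Function.update_of_ne h.ne]
  | succ w ih => simp [dnnPhi, Function.update_of_ne h.ne, ih (by omega)]

lemma dnnPhi_update_self :
    dnnPhi L (Function.update V j X) σa φ j = matCLM X (phiVec L V σa φ j) := by
  cases j with
  | zero => simp [dnnPhi, phiVec]
  | succ m => simp [dnnPhi, phiVec, dnnPhi_update_of_lt L V σa φ X (Nat.lt_succ_self m)]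

lemma dnnPhi_update_succ_of_ne {w : ℕ} (h : w + 1 ≠ j) :
    dnnPhi L (Function.update V j X) σa φ (w + 1) =
      matCLM (V (w+1)) (φ (w+1) (dnnPhi L (Function.update V j X) σa φ w)) := by
  simp [dnnPhi, Function.update_of_ne h]

theorem hasFDerivAt_dnnPhi_update {w : ℕ} (hjw : j ≤ w)
    (hφ : ∀ l, j ≤ l → l < w → DifferentiableAt ℝ (φ (l+1)) (dnnPhi L V σa φ l)) :
    HasFDerivAt (fun X => dnnPhi L (Function.update V j X) σa φ w)
      ((ordProd L V σa φ j w).comp (matCLMApply (phiVec L V σa φ j))) (V j) := by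
  induction w, hjw using Nat.le_induction with
  | base =>
    simp only [dnnPhi_update_self, ordProd_self, ContinuousLinearMap.id_comp]
    exact (matCLMApply (phiVec L V σa φ j)).hasFDerivAt
  | succ w hjw ih =>
    have hφw : HasFDerivAt (φ (w+1)) (fderiv ℝ (φ (w+1)) (dnnPhi L V σa φ w))
        (dnnPhi L (Function.update V j (V j)) σa φ w) := by
      rw [Function.update_eq_self]
      exact (hφ w hjw w.lt_succ_self).hasFDerivAt
    simp only [dnnPhi_update_succ_of_ne L V σa φ _ (by omega : w + 1 ≠ j),
      ordProd_succ_of_ne L V σa φ (by omega : j ≠ w + 1)]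
    exact (matCLM (V (w+1))).hasFDerivAt.comp (V j)
      (hφw.comp (V j) (ih fun l hjl hlw => hφ l hjl (hlw.trans w.lt_succ_self)))

end

theorem dnn_layer_hasFDerivAt_single_weight_general
    (k : ℕ) (L : ℕ → ℕ)
    (V : (j : ℕ) → Matrix (Fin (L j)) (Fin (L (j+1))) ℝ)
    (σa : EuclideanSpace ℝ (Fin (L 0)))
    (φ : (j : ℕ) → EuclideanSpace ℝ (Fin (L j)) → EuclideanSpace ℝ (Fin (L j)))
    (hφdiff : ∀ l, 1 ≤ l → l ≤ k → Differentiable ℝ (φ l)) :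
    (∀ j w, j ≤ w → w ≤ k →
      ∃ D : Matrix (Fin (L j)) (Fin (L (j+1))) ℝ →L[ℝ] EuclideanSpace ℝ (Fin (L (w+1))),
        HasFDerivAt (fun X => dnnPhi L (Function.update V j X) σa φ w) D (V j) ∧
        ∀ H, D H = ordProd L V σa φ j w (matCLM H (phiVec L V σa φ j))) ∧
    (∀ j w, w < j → w ≤ k →
      HasFDerivAt (fun X : Matrix (Fin (L j)) (Fin (L (j+1))) ℝ =>
        dnnPhi L (Function.update V j X) σa φ w)
        (0 : Matrix (Fin (L j)) (Fin (L (j+1))) ℝ →L[ℝ] EuclideanSpace ℝ (Fin (L (w+1)))) (V j)) := by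
  refine ⟨fun j w hjw hwk => ⟨_, hasFDerivAt_dnnPhi_update L V σa φ hjw ?_, fun H => rfl⟩,
    fun j w hwj _ => ?_⟩
  · exact fun l _ hlw => hφdiff (l+1) l.succ_pos (by omega) _
  · simp only [dnnPhi_update_of_lt L V σa φ _ hwj]
    exact hasFDerivAt_const _ _

/-- Regarding `Φ_w` as a function of the single weight matrix `V_j`
(all other weights and `σₐ` fixed): for `j ≤ w ≤ k` its Fréchet derivative at `V j`
applied to a direction `H` equals `(∏↶_{l=j+1}^{w} Vₗᵀ φ'ₗ(Φₗ₋₁)) (Hᵀ φⱼ)`;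
for `j > w` the derivative is the zero map. -/
theorem dnn_layer_hasFDerivAt_single_weight
    (k : ℕ) (hk : 1 ≤ k) (L : ℕ → ℕ)
    (V : (j : ℕ) → Matrix (Fin (L j)) (Fin (L (j+1))) ℝ)
    (σa : EuclideanSpace ℝ (Fin (L 0)))
    (φ : (j : ℕ) → EuclideanSpace ℝ (Fin (L j)) → EuclideanSpace ℝ (Fin (L j)))
    (hφdiff : ∀ l, 1 ≤ l → l ≤ k → Differentiable ℝ (φ l)) :
    (∀ j w, j ≤ w → w ≤ k →
      ∃ D : Matrix (Fin (L j)) (Fin (L (j+1))) ℝ →L[ℝ] EuclideanSpace ℝ (Fin (L (w+1))),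
        HasFDerivAt (fun X => dnnPhi L (Function.update V j X) σa φ w) D (V j) ∧
        ∀ H, D H = ordProd L V σa φ j w (matCLM H (phiVec L V σa φ j))) ∧
    (∀ j w, w < j → w ≤ k →
      HasFDerivAt (fun X : Matrix (Fin (L j)) (Fin (L (j+1))) ℝ =>
        dnnPhi L (Function.update V j X) σa φ w)
        (0 : Matrix (Fin (L j)) (Fin (L (j+1))) ℝ →L[ℝ] EuclideanSpace ℝ (Fin (L (w+1)))) (V j)) :=
  dnn_layer_hasFDerivAt_single_weight_general k L V σa φ hφdiff
end

section
/- Let Φ(σ, θ) ∈ ℝ^{L_{k+1}} denote the DNN output as a function of the input σ ∈ ℝ^{L_0 - 1} (with augmented input σ_a = (σ, 1)) and of the full weight tuple θ = (V_0, …, V_k) ∈ ∏_{j=0}^{k} ℝ^{L_j × L_{j+1}}, the weight space carrying the supremum over blocks of the spectral norms. Suppose each φ_j is twice continuously differentiable with ‖φ_j(y)‖ ≤ 𝔞₁‖y‖ + 𝔞₀, ‖φ'_j(y)‖ ≤ 𝔟₀, and ‖φ''_j(y)‖ ≤ 𝔠₀ for all y. Let Θ be a convex subset of the weight space such that ‖θ‖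 ≤ θ̄ for all θ ∈ Θ. Then there exist constants a₂, a₁, a₀ > 0 such that for every input σ and every pair θ*, θ̂ ∈ Θ, with θ̃ := θ* − θ̂, the first-order Taylor remainder satisfies ‖Φ(σ, θ*) − Φ(σ, θ̂) − D_θΦ(σ, θ̂)[θ̃]‖ ≤ ( a₂‖σ‖² + a₁‖σ‖ + a₀ ) ‖θ̃‖², where D_θΦ(σ, θ̂) is the Fréchet derivative of θ ↦ Φ(σ, θ) at θ̂. -/
open scoped Matrix Matrix.Norms.L2Operator

/-- Extends a tuple of weight matrices `(V₀, …, V_k)` to a function on all of `ℕ` (by zero),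
so that it can be fed to `dnnPhi`. -/
noncomputable def extendW (k : ℕ) (L : ℕ → ℕ)
    (Vt : (j : Fin (k+1)) → Matrix (Fin (L j)) (Fin (L (j+1))) ℝ) :
    (j : ℕ) → Matrix (Fin (L j)) (Fin (L (j+1))) ℝ :=
  fun j => if h : j < k + 1 then Vt ⟨j, h⟩ else 0

/-- The augmented input `σₐ = (σ, 1) ∈ ℝ^{L₀}`: the first `m` coordinates are those of `σ`
and the remaining coordinates equal `1` (used with `L₀ = m + 1`). -/
noncomputable def augInput (L0 m : ℕ) (σ : EuclideanSpace ℝ (Fin m)) :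
    EuclideanSpace ℝ (Fin L0) :=
  (EuclideanSpace.equiv (Fin L0) ℝ).symm
    (fun i => if h : (i : ℕ) < m then σ ⟨i, h⟩ else 1)

/-! A map whose derivative is `D`-Lipschitz on a convex set has first-order Taylor remainder at
most `D ‖θ̃‖²` there. Layer `j + 1` is `θ ↦ Vⱼ₊₁(θ)ᵀ φⱼ₊₁(Φⱼ(θ))`, bilinear in the weight block
and the activated previous layer, so by the chain and product rules a bound on the value, a bound
on the derivative and a Lipschitz constant of the derivative propagate from one layer to the next.
On the ball `‖θ‖ ≤ θ̄` they grow at most like `‖σₐ‖ + 1`, `‖σₐ‖ + 1` and `(‖σₐ‖ + 1)²`, and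
`‖σₐ‖ ≤ ‖σ‖ + 1`. -/

section C11Bounds

variable {E F G : Type*} [NormedAddCommGroup E] [NormedSpace ℝ E]
  [NormedAddCommGroup F] [NormedSpace ℝ F] [NormedAddCommGroup G] [NormedSpace ℝ G]

theorem ContinuousLinearMap.norm_comp_sub_comp_le (A A' : F →L[ℝ] G) (B B' : E →L[ℝ] F) :
    ‖A.comp B - A'.comp B'‖ ≤ ‖A - A'‖ * ‖B‖ + ‖A'‖ * ‖B - B'‖ := by
  have hsplit : A.comp B - A'.comp B' = (A - A').comp B + A'.comp (B - B') := by
    simp only [ContinuousLinearMap.sub_comp, ContinuousLinearMap.comp_sub]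
    abel
  rw [hsplit]
  exact (norm_add_le _ _).trans (add_le_add (opNorm_comp_le _ _) (opNorm_comp_le _ _))

structure HasC11BoundsOn (f : E → F) (s : Set E) (A B D : ℝ) : Prop where
  differentiableAt : ∀ x ∈ s, DifferentiableAt ℝ f x
  norm_le : ∀ x ∈ s, ‖f x‖ ≤ A
  norm_fderiv_le : ∀ x ∈ s, ‖fderiv ℝ f x‖ ≤ B
  norm_fderiv_sub_le : ∀ x ∈ s, ∀ y ∈ s, ‖fderiv ℝ f x - fderiv ℝ f y‖ ≤ D * ‖x - y‖

theorem ContinuousLinearMap.hasC11BoundsOn (T : E →L[ℝ] F) {s : Set E} {A : ℝ}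
    (hT : ∀ x ∈ s, ‖T x‖ ≤ A) : HasC11BoundsOn T s A ‖T‖ 0 where
  differentiableAt x _ := T.differentiableAt
  norm_le := hT
  norm_fderiv_le x _ := by rw [T.fderiv]
  norm_fderiv_sub_le x _ y _ := by simp only [T.fderiv, sub_self, norm_zero, zero_mul, le_refl]

namespace HasC11BoundsOn

variable {f : E → F} {s : Set E} {A B D : ℝ}

theorem mono (hf : HasC11BoundsOn f s A B D) {A' B' D' : ℝ} (hA : A ≤ A') (hB : B ≤ B')
    (hD : D ≤ D') : HasC11BoundsOn f s A' B' D' where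
  differentiableAt := hf.differentiableAt
  norm_le x hx := (hf.norm_le x hx).trans hA
  norm_fderiv_le x hx := (hf.norm_fderiv_le x hx).trans hB
  norm_fderiv_sub_le x hx y hy :=
    (hf.norm_fderiv_sub_le x hx y hy).trans (by gcongr)

theorem norm_sub_le (hf : HasC11BoundsOn f s A B D) (hs : Convex ℝ s) {x y : E} (hx : x ∈ s)
    (hy : y ∈ s) : ‖f x - f y‖ ≤ B * ‖x - y‖ :=
  hs.norm_image_sub_le_of_norm_fderiv_le hf.differentiableAt hf.norm_fderiv_le hy hx

theorem norm_sub_sub_fderiv_le (hf : HasC11BoundsOn f s A B D) (hs : Convex ℝ s) {x y : E}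
    (hx : x ∈ s) (hy : y ∈ s) : ‖f y - f x - fderiv ℝ f x (y - x)‖ ≤ D * ‖y - x‖ ^ 2 := by
  rcases eq_or_ne y x with rfl | hyx
  · simp
  have hD : 0 ≤ D := nonneg_of_mul_nonneg_left
    ((norm_nonneg _).trans (hf.norm_fderiv_sub_le y hy x hx)) (norm_pos_iff.2 (sub_ne_zero.2 hyx))
  have hseg : segment ℝ x y ⊆ s := hs.segment_subset hx hy
  have bound : ∀ z ∈ segment ℝ x y, ‖fderiv ℝ f z - fderiv ℝ f x‖ ≤ D * ‖y - x‖ := fun z hz =>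
    (hf.norm_fderiv_sub_le z (hseg hz) x hx).trans <| by
      gcongr
      exact norm_sub_le_of_mem_segment hz
  calc ‖f y - f x - fderiv ℝ f x (y - x)‖ ≤ D * ‖y - x‖ * ‖y - x‖ :=
        (convex_segment x y).norm_image_sub_le_of_norm_fderiv_le'
          (fun z hz => hf.differentiableAt z (hseg hz)) bound
          (left_mem_segment ℝ x y) (right_mem_segment ℝ x y)
    _ = D * ‖y - x‖ ^ 2 := by ring


theorem comp (hf : HasC11BoundsOn f s A B D) {φ : F → G} (hφ : ContDiff ℝ 2 φ) {a₀ a₁ b c : ℝ}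
    (ha₁ : 0 ≤ a₁) (hφ0 : ∀ y, ‖φ y‖ ≤ a₁ * ‖y‖ + a₀) (hφ1 : ∀ y, ‖fderiv ℝ φ y‖ ≤ b)
    (hφ2 : ∀ y, ‖fderiv ℝ (fderiv ℝ φ) y‖ ≤ c) (hs : Convex ℝ s) :
    HasC11BoundsOn (φ ∘ f) s (a₁ * A + a₀) (b * B) (c * B ^ 2 + b * D) := by
  have hb : 0 ≤ b := (norm_nonneg (fderiv ℝ φ 0)).trans (hφ1 0)
  have hc : 0 ≤ c := (norm_nonneg (fderiv ℝ (fderiv ℝ φ) 0)).trans (hφ2 0)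
  have hφd : Differentiable ℝ φ := hφ.differentiable (by norm_num)
  have hφ'd : Differentiable ℝ (fderiv ℝ φ) :=
    (hφ.fderiv_right (m := 1) (by norm_num)).differentiable (by norm_num)
  have hderiv : ∀ x ∈ s, fderiv ℝ (φ ∘ f) x = (fderiv ℝ φ (f x)).comp (fderiv ℝ f x) :=
    fun x hx => fderiv_comp x (hφd _) (hf.differentiableAt x hx)
  refine ⟨fun x hx => (hφd _).comp x (hf.differentiableAt x hx), fun x hx => ?_, fun x hx => ?_,
    fun x hx y hy => ?_⟩
  · exact (hφ0 _).trans (by gcongr; exact hf.norm_le x hx)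
  · rw [hderiv x hx]
    exact (ContinuousLinearMap.opNorm_comp_le _ _).trans
      (mul_le_mul (hφ1 _) (hf.norm_fderiv_le x hx) (norm_nonneg _) hb)
  · have hB : 0 ≤ B := (norm_nonneg _).trans (hf.norm_fderiv_le x hx)
    have hφ'_lip : ‖fderiv ℝ φ (f x) - fderiv ℝ φ (f y)‖ ≤ c * (B * ‖x - y‖) :=
      (convex_univ.norm_image_sub_le_of_norm_fderiv_le (fun z _ => hφ'd z) (fun z _ => hφ2 z)
        (Set.mem_univ _) (Set.mem_univ _)).trans (by gcongr; exact hf.norm_sub_le hs hx hy)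
    rw [hderiv x hx, hderiv y hy]
    calc _ ≤ c * (B * ‖x - y‖) * B + b * (D * ‖x - y‖) :=
          (ContinuousLinearMap.norm_comp_sub_comp_le _ _ _ _).trans <| add_le_add
            (mul_le_mul hφ'_lip (hf.norm_fderiv_le x hx) (norm_nonneg _) (by positivity))
            (mul_le_mul (hφ1 _) (hf.norm_fderiv_sub_le x hx y hy) (norm_nonneg _) hb)
      _ = (c * B ^ 2 + b * D) * ‖x - y‖ := by ring

theorem clm_apply (hf : HasC11BoundsOn f s A B D) {W : E →L[ℝ] F →L[ℝ] G} (hW : ‖W‖ ≤ 1)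
    {w : ℝ} (hWs : ∀ x ∈ s, ‖W x‖ ≤ w) (hs : Convex ℝ s) :
    HasC11BoundsOn (fun x => W x (f x)) s (w * A) (w * B + A) (2 * B + w * D) := by
  have hWflip : ∀ y, ‖W.flip y‖ ≤ ‖y‖ := fun y => (W.flip.le_opNorm y).trans <| by
    rw [W.opNorm_flip]; exact mul_le_of_le_one_left (norm_nonneg _) hW
  have hderiv : ∀ x ∈ s,
      HasFDerivAt (fun x => W x (f x)) ((W x).comp (fderiv ℝ f x) + W.flip (f x)) x :=
    fun x hx => W.hasFDerivAt.clm_apply (hf.differentiableAt x hx).hasFDerivAt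
  refine ⟨fun x hx => (hderiv x hx).differentiableAt, fun x hx => ?_, fun x hx => ?_,
    fun x hx y hy => ?_⟩
  · exact ((W x).le_opNorm _).trans (mul_le_mul (hWs x hx) (hf.norm_le x hx) (norm_nonneg _)
      ((norm_nonneg _).trans (hWs x hx)))
  · rw [(hderiv x hx).fderiv]
    calc _ ≤ ‖W x‖ * ‖fderiv ℝ f x‖ + ‖f x‖ :=
          (norm_add_le _ _).trans (add_le_add (ContinuousLinearMap.opNorm_comp_le _ _) (hWflip _))
      _ ≤ w * B + A := by
          gcongr
          exacts [(norm_nonneg _).trans (hWs x hx), hWs x hx, hf.norm_fderiv_le x hx,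
            hf.norm_le x hx]
  · have hWxy : ‖W x - W y‖ ≤ ‖x - y‖ := by
      rw [← map_sub]
      exact (W.le_opNorm _).trans (mul_le_of_le_one_left (norm_nonneg _) hW)
    have hsplit : (W x).comp (fderiv ℝ f x) + W.flip (f x)
          - ((W y).comp (fderiv ℝ f y) + W.flip (f y))
        = ((W x).comp (fderiv ℝ f x) - (W y).comp (fderiv ℝ f y)) + W.flip (f x - f y) := by
      rw [map_sub]; abel
    rw [(hderiv x hx).fderiv, (hderiv y hy).fderiv, hsplit]
    calc _ ≤ ‖W x - W y‖ * ‖fderiv ℝ f x‖ + ‖W y‖ * ‖fderiv ℝ f x - fderiv ℝ f y‖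
            + ‖f x - f y‖ :=
          (norm_add_le _ _).trans
            (add_le_add (ContinuousLinearMap.norm_comp_sub_comp_le _ _ _ _) (hWflip _))
      _ ≤ ‖x - y‖ * B + w * (D * ‖x - y‖) + B * ‖x - y‖ := by
          gcongr
          exacts [hf.norm_fderiv_le x hx, (norm_nonneg _).trans (hWs y hy), hWs y hy,
            hf.norm_fderiv_sub_le x hx y hy, hf.norm_sub_le hs hx hy]
      _ = (2 * B + w * D) * ‖x - y‖ := by ring

end HasC11BoundsOn

end C11Bounds

theorem norm_matCLM {a b : ℕ} (A : Matrix (Fin a) (Fin b) ℝ) : ‖matCLM A‖ = ‖A‖ := by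
  rw [← Matrix.l2_opNorm_conjTranspose, Matrix.conjTranspose_eq_transpose_of_trivial]
  rfl

noncomputable def matCLML {a b : ℕ} :
    Matrix (Fin a) (Fin b) ℝ →L[ℝ] EuclideanSpace ℝ (Fin a) →L[ℝ] EuclideanSpace ℝ (Fin b) :=
  LinearMap.toContinuousLinearMap
    ((Matrix.transposeLinearEquiv (Fin a) (Fin b) ℝ ℝ).trans
      (Matrix.toEuclideanLin.trans LinearMap.toContinuousLinearMap)).toLinearMap

noncomputable def layerCLM (k : ℕ) (L : ℕ → ℕ) (i : Fin (k + 1)) :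
    ((j : Fin (k + 1)) → Matrix (Fin (L j)) (Fin (L (j + 1))) ℝ) →L[ℝ]
      EuclideanSpace ℝ (Fin (L i)) →L[ℝ] EuclideanSpace ℝ (Fin (L (i + 1))) :=
  matCLML.comp (ContinuousLinearMap.proj i)

theorem layerCLM_apply {k : ℕ} {L : ℕ → ℕ} (i : Fin (k + 1))
    (θ : (j : Fin (k + 1)) → Matrix (Fin (L j)) (Fin (L (j + 1))) ℝ) :
    layerCLM k L i θ = matCLM (θ i) := rfl

theorem norm_layerCLM_apply_le {k : ℕ} {L : ℕ → ℕ} (i : Fin (k + 1))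
    (θ : (j : Fin (k + 1)) → Matrix (Fin (L j)) (Fin (L (j + 1))) ℝ) :
    ‖layerCLM k L i θ‖ ≤ ‖θ‖ := by
  rw [layerCLM_apply, norm_matCLM]
  exact norm_le_pi_norm θ i

theorem norm_layerCLM_le (k : ℕ) (L : ℕ → ℕ) (i : Fin (k + 1)) : ‖layerCLM k L i‖ ≤ 1 :=
  ContinuousLinearMap.opNorm_le_bound _ zero_le_one fun θ =>
    (norm_layerCLM_apply_le i θ).trans_eq (one_mul _).symm

theorem dnnPhi_extendW_zero (k : ℕ) (L : ℕ → ℕ)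
    (θ : (j : Fin (k + 1)) → Matrix (Fin (L j)) (Fin (L (j + 1))) ℝ)
    (σa : EuclideanSpace ℝ (Fin (L 0)))
    (φ : (j : ℕ) → EuclideanSpace ℝ (Fin (L j)) → EuclideanSpace ℝ (Fin (L j))) :
    dnnPhi L (extendW k L θ) σa φ 0 = layerCLM k L 0 θ σa := by
  rw [dnnPhi, extendW, dif_pos k.succ_pos]
  rfl

theorem dnnPhi_extendW_succ {k : ℕ} (L : ℕ → ℕ)
    (θ : (j : Fin (k + 1)) → Matrix (Fin (L j)) (Fin (L (j + 1))) ℝ)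
    (σa : EuclideanSpace ℝ (Fin (L 0)))
    (φ : (j : ℕ) → EuclideanSpace ℝ (Fin (L j)) → EuclideanSpace ℝ (Fin (L j)))
    {j : ℕ} (hj : j + 1 < k + 1) :
    dnnPhi L (extendW k L θ) σa φ (j + 1)
      = layerCLM k L ⟨j + 1, hj⟩ θ (φ (j + 1) (dnnPhi L (extendW k L θ) σa φ j)) := by
  rw [dnnPhi, extendW, dif_pos hj]
  rfl

theorem norm_augInput_le {L0 m : ℕ} (h : L0 = m + 1) (σ : EuclideanSpace ℝ (Fin m)) :
    ‖augInput L0 m σ‖ ≤ ‖σ‖ + 1 := by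
  subst h
  have hsq : ‖augInput (m + 1) m σ‖ ^ 2 = ‖σ‖ ^ 2 + 1 := by
    rw [EuclideanSpace.norm_sq_eq, EuclideanSpace.norm_sq_eq, Fin.sum_univ_castSucc]
    simp [augInput]
  nlinarith [norm_nonneg (augInput (m + 1) m σ), norm_nonneg σ]

theorem exists_hasC11BoundsOn_dnnPhi {k : ℕ} {L : ℕ → ℕ}
    {φ : (j : ℕ) → EuclideanSpace ℝ (Fin (L j)) → EuclideanSpace ℝ (Fin (L j))}
    {a₀ a₁ b c r : ℝ} (ha₁ : 0 ≤ a₁) (hr : 0 ≤ r)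
    (hφ : ∀ l, 1 ≤ l → l ≤ k → ContDiff ℝ 2 (φ l))
    (hφ0 : ∀ l, 1 ≤ l → l ≤ k → ∀ y, ‖φ l y‖ ≤ a₁ * ‖y‖ + a₀)
    (hφ1 : ∀ l, 1 ≤ l → l ≤ k → ∀ y, ‖fderiv ℝ (φ l) y‖ ≤ b)
    (hφ2 : ∀ l, 1 ≤ l → l ≤ k → ∀ y, ‖fderiv ℝ (fderiv ℝ (φ l)) y‖ ≤ c) :
    ∀ j ≤ k, ∃ C, 0 < C ∧ ∀ σa : EuclideanSpace ℝ (Fin (L 0)),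
      HasC11BoundsOn (fun θ => dnnPhi L (extendW k L θ) σa φ j) (Metric.closedBall 0 r)
        (C * (‖σa‖ + 1)) (C * (‖σa‖ + 1)) (C * (‖σa‖ + 1) ^ 2) := by
  have hWs : ∀ i, ∀ θ ∈ Metric.closedBall 0 r, ‖layerCLM k L i θ‖ ≤ r := fun i θ hθ =>
    (norm_layerCLM_apply_le i θ).trans (mem_closedBall_zero_iff.1 hθ)
  intro j
  induction j with
  | zero =>
    intro _
    refine ⟨r + 1, by positivity, fun σa => ?_⟩
    have hlin : (fun θ => dnnPhi L (extendW k L θ) σa φ 0) = (layerCLM k L 0).flip σa := by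
      funext θ
      exact dnnPhi_extendW_zero k L θ σa φ
    rw [hlin]
    refine (((layerCLM k L 0).flip σa).hasC11BoundsOn (A := r * ‖σa‖) fun θ hθ =>
      ((layerCLM k L 0 θ).le_opNorm σa).trans
        (mul_le_mul_of_nonneg_right (hWs 0 θ hθ) (norm_nonneg σa))).mono ?_ ?_ ?_
    · nlinarith [norm_nonneg σa]
    · calc ‖(layerCLM k L 0).flip σa‖ ≤ ‖layerCLM k L 0‖ * ‖σa‖ := by
            rw [← (layerCLM k L 0).opNorm_flip]; exact ContinuousLinearMap.le_opNorm _ _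
        _ ≤ (r + 1) * (‖σa‖ + 1) := by nlinarith [norm_layerCLM_le k L 0, norm_nonneg σa]
    · positivity
  | succ j ih =>
    intro hj
    obtain ⟨C, hC, hbounds⟩ := ih (Nat.le_of_succ_le hj)
    have hj₁ : 1 ≤ j + 1 := Nat.le_add_left 1 j
    have hjk : j + 1 < k + 1 := Nat.lt_succ_of_le hj
    have ha₀ : 0 ≤ a₀ := by simpa using (norm_nonneg _).trans (hφ0 (j + 1) hj₁ hj 0)
    have hb : 0 ≤ b := (norm_nonneg _).trans (hφ1 (j + 1) hj₁ hj 0)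
    have hc : 0 ≤ c :=
      (norm_nonneg (fderiv ℝ (fderiv ℝ (φ (j + 1))) 0)).trans (hφ2 (j + 1) hj₁ hj 0)
    refine ⟨(r + 1) * (a₁ * C + a₀ + b * C) + 2 * b * C + r * c * C ^ 2 + r * b * C + 1,
      by positivity, fun σa => ?_⟩
    have hlayer : (fun θ => dnnPhi L (extendW k L θ) σa φ (j + 1))
        = fun θ => layerCLM k L ⟨j + 1, hjk⟩ θ (φ (j + 1) (dnnPhi L (extendW k L θ) σa φ j)) := by
      funext θ
      exact dnnPhi_extendW_succ L θ σa φ hjk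
    rw [hlayer]
    -- With `‖σa‖ ≥ 0` as the variable, each difference is a polynomial with nonnegative
    -- coefficients.
    refine (((hbounds σa).comp (hφ (j + 1) hj₁ hj) ha₁ (hφ0 (j + 1) hj₁ hj)
      (hφ1 (j + 1) hj₁ hj) (hφ2 (j + 1) hj₁ hj) (convex_closedBall 0 r)).clm_apply
      (norm_layerCLM_le k L ⟨j + 1, hjk⟩) (hWs _) (convex_closedBall 0 r)).mono ?_ ?_ ?_ <;>
    · rw [← sub_nonneg]; ring_nf; positivity

theorem dnn_taylor_remainder_quadratic_bound_general
    (k : ℕ) (L : ℕ → ℕ) (m : ℕ) (hL0 : L 0 = m + 1)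
    (φ : (j : ℕ) → EuclideanSpace ℝ (Fin (L j)) → EuclideanSpace ℝ (Fin (L j)))
    (𝔞₀ 𝔞₁ 𝔟₀ 𝔠₀ θbar : ℝ)
    (ha1 : 0 ≤ 𝔞₁) (hθ : 0 < θbar)
    (hφsmooth : ∀ l, 1 ≤ l → l ≤ k → ContDiff ℝ 2 (φ l))
    (hφ : ∀ l, 1 ≤ l → l ≤ k → ∀ y, ‖φ l y‖ ≤ 𝔞₁ * ‖y‖ + 𝔞₀)
    (hφ' : ∀ l, 1 ≤ l → l ≤ k → ∀ y, ‖fderiv ℝ (φ l) y‖ ≤ 𝔟₀)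
    (hφ'' : ∀ l, 1 ≤ l → l ≤ k → ∀ y, ‖fderiv ℝ (fderiv ℝ (φ l)) y‖ ≤ 𝔠₀)
    (Θ : Set ((i : Fin (k+1)) → Matrix (Fin (L i)) (Fin (L (i+1))) ℝ))
    (hΘbdd : ∀ θ ∈ Θ, ‖θ‖ ≤ θbar) :
    ∃ a₂ a₁ a₀ : ℝ, 0 < a₂ ∧ 0 < a₁ ∧ 0 < a₀ ∧
      ∀ (σ : EuclideanSpace ℝ (Fin m)), ∀ θstar ∈ Θ, ∀ θhat ∈ Θ,
        ‖dnnPhi L (extendW k L θstar) (augInput (L 0) m σ) φ k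
            - dnnPhi L (extendW k L θhat) (augInput (L 0) m σ) φ k
            - fderiv ℝ (fun Wt => dnnPhi L (extendW k L Wt) (augInput (L 0) m σ) φ k) θhat
                (θstar - θhat)‖ ≤
          (a₂ * ‖σ‖ ^ 2 + a₁ * ‖σ‖ + a₀) * ‖θstar - θhat‖ ^ 2 := by
  obtain ⟨C, hC, hbounds⟩ :=
    exists_hasC11BoundsOn_dnnPhi ha1 hθ.le hφsmooth hφ hφ' hφ'' k le_rfl
  refine ⟨C, 4 * C, 4 * C, hC, by positivity, by positivity, fun σ θstar hstar θhat hhat => ?_⟩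
  have hball : Θ ⊆ Metric.closedBall 0 θbar := fun θ hθ => mem_closedBall_zero_iff.2 (hΘbdd θ hθ)
  have hσa : ‖augInput (L 0) m σ‖ + 1 ≤ ‖σ‖ + 2 := by linarith [norm_augInput_le hL0 σ]
  calc _ ≤ C * (‖augInput (L 0) m σ‖ + 1) ^ 2 * ‖θstar - θhat‖ ^ 2 :=
        (hbounds _).norm_sub_sub_fderiv_le (convex_closedBall 0 θbar) (hball hhat) (hball hstar)
    _ ≤ C * (‖σ‖ + 2) ^ 2 * ‖θstar - θhat‖ ^ 2 := by gcongr
    _ = (C * ‖σ‖ ^ 2 + 4 * C * ‖σ‖ + 4 * C) * ‖θstar - θhat‖ ^ 2 := by ring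

/-- Let `Φ(σ, θ)` be the DNN output as a function of the input `σ ∈ ℝ^{L₀-1}`
(with augmented input `σₐ = (σ,1)`) and of the weight tuple `θ = (V₀,…,V_k)` (sup-over-blocks
of spectral norms). With `C²` activations satisfying `‖φⱼ(y)‖ ≤ 𝔞₁‖y‖ + 𝔞₀`, `‖φ'ⱼ(y)‖ ≤ 𝔟₀`,
`‖φ''ⱼ(y)‖ ≤ 𝔠₀`, and `Θ` convex with `‖θ‖ ≤ θ̄` on `Θ`, there exist `a₂, a₁, a₀ > 0` such that
for every `σ` and all `θ*, θ̂ ∈ Θ`, the first-order Taylor remainder satisfies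
`‖Φ(σ,θ*) − Φ(σ,θ̂) − DθΦ(σ,θ̂)[θ̃]‖ ≤ (a₂‖σ‖² + a₁‖σ‖ + a₀)‖θ̃‖²` with `θ̃ = θ* − θ̂`. -/
theorem dnn_taylor_remainder_quadratic_bound
    (k : ℕ) (hk : 1 ≤ k) (L : ℕ → ℕ) (m : ℕ) (hL0 : L 0 = m + 1)
    (φ : (j : ℕ) → EuclideanSpace ℝ (Fin (L j)) → EuclideanSpace ℝ (Fin (L j)))
    (𝔞₀ 𝔞₁ 𝔟₀ 𝔠₀ θbar : ℝ)
    (ha0 : 0 < 𝔞₀) (ha1 : 0 ≤ 𝔞₁) (hb0 : 0 < 𝔟₀) (hc0 : 0 < 𝔠₀) (hθ : 0 < θbar)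
    (hφsmooth : ∀ l, 1 ≤ l → l ≤ k → ContDiff ℝ 2 (φ l))
    (hφ : ∀ l, 1 ≤ l → l ≤ k → ∀ y, ‖φ l y‖ ≤ 𝔞₁ * ‖y‖ + 𝔞₀)
    (hφ' : ∀ l, 1 ≤ l → l ≤ k → ∀ y, ‖fderiv ℝ (φ l) y‖ ≤ 𝔟₀)
    (hφ'' : ∀ l, 1 ≤ l → l ≤ k → ∀ y, ‖fderiv ℝ (fderiv ℝ (φ l)) y‖ ≤ 𝔠₀)
    (Θ : Set ((i : Fin (k+1)) → Matrix (Fin (L i)) (Fin (L (i+1))) ℝ))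
    (hΘconv : Convex ℝ Θ) (hΘbdd : ∀ θ ∈ Θ, ‖θ‖ ≤ θbar) :
    ∃ a₂ a₁ a₀ : ℝ, 0 < a₂ ∧ 0 < a₁ ∧ 0 < a₀ ∧
      ∀ (σ : EuclideanSpace ℝ (Fin m)), ∀ θstar ∈ Θ, ∀ θhat ∈ Θ,
        ‖dnnPhi L (extendW k L θstar) (augInput (L 0) m σ) φ k
            - dnnPhi L (extendW k L θhat) (augInput (L 0) m σ) φ k
            - fderiv ℝ (fun Wt => dnnPhi L (extendW k L Wt) (augInput (L 0) m σ) φ k) θhat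
                (θstar - θhat)‖ ≤
          (a₂ * ‖σ‖ ^ 2 + a₁ * ‖σ‖ + a₀) * ‖θstar - θhat‖ ^ 2 :=
  dnn_taylor_remainder_quadratic_bound_general k L m hL0 φ 𝔞₀ 𝔞₁ 𝔟₀ 𝔠₀ θbar ha1 hθ hφsmooth hφ hφ'
    hφ'' Θ hΘbdd
end
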